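/- For any n-regular graph G with κ(G) ≥ 3, λ'(G®C_n) = min{λ(G), 4}, where C_n is the cycle on n vertices. -/

import Mathlib

open SimpleGraph

section Defs

variable {V : Type*}

/-- The set of edges of `G` with one endpoint in `X` and the other outside `X`. -/
def edgeBoundary (G : SimpleGraph V) (X : Set V) : Set (Sym2 V) :=
  {e | e ∈ G.edgeSet ∧ ∃ u ∈ X, ∃ v ∈ Xᶜ, e = s(u, v)}

/-- The edge-connectivity `λ(G)`: the minimum number of edges whose removal disconnects `G`. -/
noncomputable def edgeConn (G : SimpleGraph V) : ℕ :=
  sInf {k | ∃ F : Set (Sym2 V), F ⊆ G.edgeSet ∧ F.ncard = k ∧ ¬(G.deleteEdges F).Connected}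

/-- `F` is a restricted edge-cut of `G`: removing `F` disconnects `G` and leaves no
isolated vertices. -/
def IsRestrictedEdgeCut (G : SimpleGraph V) (F : Set (Sym2 V)) : Prop :=
  F ⊆ G.edgeSet ∧ ¬(G.deleteEdges F).Connected ∧ ∀ v : V, ∃ w : V, (G.deleteEdges F).Adj v w

/-- The restricted edge-connectivity `λ'(G)`. -/
noncomputable def restrictedEdgeConn (G : SimpleGraph V) : ℕ :=
  sInf {k | ∃ F : Set (Sym2 V), IsRestrictedEdgeCut G F ∧ F.ncard = k}

/-- The vertex-connectivity `κ(G)`: the minimum size of a set of vertices whose removal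
leaves a disconnected graph or a graph with at most one vertex. -/
noncomputable def vertexConn (G : SimpleGraph V) : ℕ :=
  sInf {k | ∃ S : Set V, S.ncard = k ∧
    (¬(G.induce (Sᶜ : Set V)).Connected ∨ (Sᶜ : Set V).ncard ≤ 1)}

/-- The minimum edge-degree `ξ(G) = min {d(u) + d(v) - 2 : uv ∈ E(G)}`. -/
noncomputable def minEdgeDegree (G : SimpleGraph V) : ℕ :=
  sInf {k | ∃ u v : V, G.Adj u v ∧ (G.neighborSet u).ncard + (G.neighborSet v).ncard - 2 = k}

/-- `G` is `λ'`-optimal if `λ'(G) = ξ(G)`. -/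
def LambdaPrimeOptimal (G : SimpleGraph V) : Prop :=
  restrictedEdgeConn G = minEdgeDegree G

/-- The replacement product of `G1` and `G2` with respect to an edge-labelling `ℓ`,
where `ℓ x i` is the other endpoint of the edge of `G1` labelled `i` at the vertex `x`.
Vertices `(x, i)` and `(y, j)` are adjacent iff either `x = y` and `i j ∈ E(G2)`, or
`x y ∈ E(G1)` and the edge `x y` is labelled `i` at `x` and `j` at `y`. -/
def replacementProduct {V1 V2 : Type*} (G1 : SimpleGraph V1) (G2 : SimpleGraph V2)
    (ℓ : V1 → V2 → V1) : SimpleGraph (V1 × V2) where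
  Adj p q := (p.1 = q.1 ∧ G2.Adj p.2 q.2) ∨
    (G1.Adj p.1 q.1 ∧ ℓ p.1 p.2 = q.1 ∧ ℓ q.1 q.2 = p.1)
  symm := ⟨by
    rintro p q (⟨h1, h2⟩ | ⟨h1, h2, h3⟩)
    · exact Or.inl ⟨h1.symm, h2.symm⟩
    · exact Or.inr ⟨h1.symm, h3, h2⟩⟩
  loopless := ⟨by
    rintro p (⟨_, h⟩ | ⟨h, _⟩)
    · exact G2.irrefl h
    · exact G1.irrefl h⟩

/-- `ℓ` is a valid edge-labelling of `G1` for the replacement product: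
for each vertex `x`, `ℓ x` is injective and `ℓ x i` is always a neighbour of `x`
(hence `ℓ x` enumerates the neighbours of `x` when `G1` is `|V2|`-regular). -/
def IsRPLabelling {V1 V2 : Type*} (G1 : SimpleGraph V1) (ℓ : V1 → V2 → V1) : Prop :=
  (∀ x, Function.Injective (ℓ x)) ∧ ∀ x i, G1.Adj x (ℓ x i)

end Defs

/-!
Call `{x} × Fin n` the cloud of `x`: the edges of `G ® Cₙ` are the cycle edges inside the clouds
and, over each edge `xy` of `G`, exactly one cross edge. Lifting a minimum edge cut of `G` to its
cross edges leaves every cloud connected, and the four edges around a cloud edge `(x, 0)(x, 1)`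
cut it off; so `λ' ≤ min {λ(G), 4}`.

Conversely, let `S` be one side of a restricted edge cut. If `S` is a union of clouds, the
boundary of `S` projects onto the edge cut of `G` between the full and the empty clouds, so it
has at least `λ(G)` edges. Otherwise `S` splits some cloud `x`, whose cycle contributes two
boundary edges, and two more boundary edges lie outside that cloud: on a second split cloud;
or, when `S` or its complement lies inside the cloud of `x`, at the cross edges of two adjacent
vertices there (a restricted cut leaves no isolated vertex); or else over two distinct edges of
`G - x` between full and empty clouds, which exist because `κ(G) ≥ 3` makes `G - x`
2-edge-connected.
-/

section EdgeBoundary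

variable {V : Type*} {G : SimpleGraph V} {S : Set V}

lemma edgeBoundary_compl : edgeBoundary G Sᶜ = edgeBoundary G S := by
  ext e
  constructor <;>
  · rintro ⟨he, u, hu, v, hv, rfl⟩
    exact ⟨he, v, by simpa using hv, u, by simpa using hu, Sym2.eq_swap⟩

lemma deleteEdges_edgeBoundary_adj {v w : V} :
    (G.deleteEdges (edgeBoundary G S)).Adj v w ↔ G.Adj v w ∧ (v ∈ S ↔ w ∈ S) := by
  rw [deleteEdges_adj]
  refine and_congr_right fun h => ⟨fun hn => ⟨fun hv => ?_, fun hw => ?_⟩, ?_⟩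
  · by_contra hw
    exact hn ⟨h, v, hv, w, hw, rfl⟩
  · by_contra hv
    exact hn ⟨h, w, hw, v, hv, Sym2.eq_swap⟩
  · rintro hvw ⟨-, u, hu, u', hu', he⟩
    rcases Sym2.eq_iff.1 he with ⟨rfl, rfl⟩ | ⟨rfl, rfl⟩
    exacts [hu' (hvw.1 hu), hu' (hvw.2 hu)]

lemma not_connected_deleteEdges_edgeBoundary (hS : S.Nonempty) (hSc : Sᶜ.Nonempty) :
    ¬(G.deleteEdges (edgeBoundary G S)).Connected := by
  obtain ⟨a, ha⟩ := hS
  obtain ⟨b, hb⟩ := hSc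
  intro h
  obtain ⟨d, -, hd, hd'⟩ := (h.preconnected a b).some.exists_boundary_dart S ha hb
  exact hd' ((deleteEdges_edgeBoundary_adj.1 d.adj).2.1 hd)

lemma edgeBoundary_subset_of_adj_iff {F : Set (Sym2 V)}
    (h : ∀ v w, (G.deleteEdges F).Adj v w → (v ∈ S ↔ w ∈ S)) : edgeBoundary G S ⊆ F := by
  rintro _ ⟨he, u, hu, v, hv, rfl⟩
  by_contra hF
  exact hv ((h u v (deleteEdges_adj.2 ⟨he, hF⟩)).1 hu)

lemma exists_adj_iff_of_not_connected [Nonempty V] (h : ¬G.Connected) :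
    ∃ S : Set V, S.Nonempty ∧ Sᶜ.Nonempty ∧ ∀ v w, G.Adj v w → (v ∈ S ↔ w ∈ S) := by
  obtain ⟨u, v, huv⟩ : ∃ u v, ¬G.Reachable u v := by
    by_contra! h'
    exact h ⟨h'⟩
  exact ⟨{w | G.Reachable u w}, ⟨u, .refl u⟩, ⟨v, huv⟩, fun w w' hww' =>
    ⟨fun h => h.trans hww'.reachable, fun h => h.trans hww'.symm.reachable⟩⟩

lemma edgeConn_le_ncard_edgeBoundary (hS : S.Nonempty) (hSc : Sᶜ.Nonempty) :
    edgeConn G ≤ (edgeBoundary G S).ncard :=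
  Nat.sInf_le ⟨_, fun _ he => he.1, rfl, not_connected_deleteEdges_edgeBoundary hS hSc⟩

lemma exists_ncard_edgeBoundary_le_edgeConn [Finite V] [Nontrivial V] :
    ∃ S : Set V, S.Nonempty ∧ Sᶜ.Nonempty ∧ (edgeBoundary G S).ncard ≤ edgeConn G := by
  obtain ⟨x, y, hxy⟩ := exists_pair_ne V
  obtain ⟨F, -, hF, hdisc⟩ := Nat.sInf_mem (⟨_, _, fun _ he => he.1, rfl,
    not_connected_deleteEdges_edgeBoundary (S := {x}) ⟨x, rfl⟩ ⟨y, hxy.symm⟩⟩ :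
      {k | ∃ F : Set (Sym2 V), F ⊆ G.edgeSet ∧ F.ncard = k ∧
        ¬(G.deleteEdges F).Connected}.Nonempty)
  obtain ⟨S, hS, hSc, hadj⟩ := exists_adj_iff_of_not_connected hdisc
  exact ⟨S, hS, hSc, (Set.ncard_le_ncard (edgeBoundary_subset_of_adj_iff hadj)).trans hF.le⟩

lemma isRestrictedEdgeCut_edgeBoundary (hS : S.Nonempty) (hSc : Sᶜ.Nonempty)
    (hside : ∀ v, ∃ w, G.Adj v w ∧ (v ∈ S ↔ w ∈ S)) :
    IsRestrictedEdgeCut G (edgeBoundary G S) :=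
  ⟨fun _ he => he.1, not_connected_deleteEdges_edgeBoundary hS hSc,
    fun v => (hside v).imp fun _ => deleteEdges_edgeBoundary_adj.2⟩

lemma restrictedEdgeConn_le_ncard {F : Set (Sym2 V)} (hF : IsRestrictedEdgeCut G F) :
    restrictedEdgeConn G ≤ F.ncard :=
  Nat.sInf_le ⟨F, hF, rfl⟩

lemma le_restrictedEdgeConn {k : ℕ} (hne : ∃ F, IsRestrictedEdgeCut G F)
    (h : ∀ F, IsRestrictedEdgeCut G F → k ≤ F.ncard) : k ≤ restrictedEdgeConn G := by
  obtain ⟨F, hF⟩ := hne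
  refine le_csInf ⟨_, F, hF, rfl⟩ ?_
  rintro _ ⟨F, hF, rfl⟩
  exact h F hF

lemma IsRestrictedEdgeCut.exists_edgeBoundary_subset [Nonempty V] {F : Set (Sym2 V)}
    (hF : IsRestrictedEdgeCut G F) :
    ∃ S : Set V, S.Nonempty ∧ Sᶜ.Nonempty ∧ (∀ v, ∃ w, G.Adj v w ∧ (v ∈ S ↔ w ∈ S)) ∧
      edgeBoundary G S ⊆ F := by
  obtain ⟨S, hS, hSc, hadj⟩ := exists_adj_iff_of_not_connected hF.2.1
  refine ⟨S, hS, hSc, fun v => ?_, edgeBoundary_subset_of_adj_iff hadj⟩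
  obtain ⟨w, hw⟩ := hF.2.2 v
  exact ⟨w, (deleteEdges_adj.1 hw).1, hadj v w hw⟩

end EdgeBoundary

section VertexConn

variable {V : Type*} {G : SimpleGraph V} {K : Set V}

lemma vertexConn_le_ncard (h : ¬(G.induce Kᶜ).Connected ∨ Kᶜ.ncard ≤ 1) :
    vertexConn G ≤ K.ncard :=
  Nat.sInf_le ⟨K, rfl, h⟩

lemma one_lt_ncard_compl_of_ncard_lt_vertexConn (hK : K.ncard < vertexConn G) :
    1 < Kᶜ.ncard := by
  by_contra! h
  exact (vertexConn_le_ncard (Or.inr h)).not_gt hK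

lemma exists_adj_of_ncard_lt_vertexConn (hK : K.ncard < vertexConn G) {X : Set V} {a b : V}
    (ha : a ∈ X) (haK : a ∉ K) (hb : b ∉ X) (hbK : b ∉ K) :
    ∃ u ∈ X, ∃ v ∉ X, u ∉ K ∧ v ∉ K ∧ G.Adj u v := by
  have hconn : (G.induce Kᶜ).Connected := by
    by_contra h
    exact (vertexConn_le_ncard (Or.inl h)).not_gt hK
  obtain ⟨d, -, hd, hd'⟩ := (hconn.preconnected ⟨a, haK⟩ ⟨b, hbK⟩).some.exists_boundary_dart
    (Subtype.val ⁻¹' X) ha hb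
  exact ⟨d.fst, hd, d.snd, hd', d.fst.2, d.snd.2, d.adj⟩

lemma nontrivial_of_pos_vertexConn (h : 0 < vertexConn G) : Nontrivial V := by
  have h1 := one_lt_ncard_compl_of_ncard_lt_vertexConn (G := G) (K := ∅)
    (by rwa [Set.ncard_empty])
  obtain ⟨a, b, -, -, hab⟩ := (Set.one_lt_ncard_iff (Set.finite_of_ncard_pos (by omega))).1 h1
  exact ⟨a, b, hab⟩

lemma vertexConn_le_ncard_neighborSet (x : V) : vertexConn G ≤ (G.neighborSet x).ncard := by
  by_contra! h
  obtain ⟨y, hy, hyx⟩ :=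
    Set.exists_ne_of_one_lt_ncard (one_lt_ncard_compl_of_ncard_lt_vertexConn h) x
  obtain ⟨u, rfl, v, -, -, hv, huv⟩ :=
    exists_adj_of_ncard_lt_vertexConn h (X := {x}) rfl G.irrefl hyx hy
  exact hv huv

lemma exists_ne_mem_edgeBoundary_of_three_le_vertexConn (h3 : 3 ≤ vertexConn G)
    {X : Set V} {x a b : V} (hxX : x ∉ X) (ha : a ∈ X) (hb : b ∉ X) (hbx : b ≠ x) :
    ∃ e₁ ∈ edgeBoundary G X, ∃ e₂ ∈ edgeBoundary G X, e₁ ≠ e₂ ∧ x ∉ e₁ ∧ x ∉ e₂ := by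
  have hK₁ : ({x} : Set V).ncard < vertexConn G := by rw [Set.ncard_singleton]; omega
  have hK₂ (y : V) : ({x, y} : Set V).ncard < vertexConn G :=
    (Set.ncard_insert_le _ _).trans_lt (by rw [Set.ncard_singleton]; omega)
  obtain ⟨u₁, hu₁, v₁, hv₁, hu₁x, hv₁x, h₁⟩ :=
    exists_adj_of_ncard_lt_vertexConn hK₁ ha (ne_of_mem_of_not_mem ha hxX) hb hbx
  rw [Set.mem_singleton_iff] at hu₁x hv₁x
  obtain ⟨u₂, hu₂, v₂, hv₂, hv₂x, h₂, hne⟩ :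
      ∃ u₂ ∈ X, ∃ v₂ ∉ X, v₂ ≠ x ∧ G.Adj u₂ v₂ ∧ (u₂ ≠ u₁ ∨ v₂ ≠ v₁) := by
    by_cases hX : ∃ a' ∈ X, a' ≠ u₁
    · obtain ⟨a', ha', ha'u⟩ := hX
      obtain ⟨u₂, hu₂, v₂, hv₂, hu₂K, hv₂K, h₂⟩ := exists_adj_of_ncard_lt_vertexConn (hK₂ u₁)
        ha' (by simp [ha'u, ne_of_mem_of_not_mem ha' hxX]) hv₁
        (by simp [hv₁x, (ne_of_mem_of_not_mem hu₁ hv₁).symm])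
      simp only [Set.mem_insert_iff, Set.mem_singleton_iff, not_or] at hu₂K hv₂K
      exact ⟨u₂, hu₂, v₂, hv₂, hv₂K.1, h₂, .inl hu₂K.2⟩
    · push Not at hX
      obtain ⟨b', hb'K, hb'v⟩ :=
        Set.exists_ne_of_one_lt_ncard (one_lt_ncard_compl_of_ncard_lt_vertexConn (hK₂ u₁)) v₁
      simp only [Set.mem_compl_iff, Set.mem_insert_iff, Set.mem_singleton_iff, not_or] at hb'K
      obtain ⟨u₂, hu₂, v₂, hv₂, -, hv₂K, h₂⟩ := exists_adj_of_ncard_lt_vertexConn (hK₂ v₁)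
        hu₁ (by simp [hu₁x, ne_of_mem_of_not_mem hu₁ hv₁]) (fun h => hb'K.2 (hX b' h))
        (by simp [hb'K.1, hb'v])
      simp only [Set.mem_insert_iff, Set.mem_singleton_iff, not_or] at hv₂K
      exact ⟨u₂, hu₂, v₂, hv₂, hv₂K.1, h₂, .inr hv₂K.2⟩
  refine ⟨s(u₁, v₁), ⟨h₁, u₁, hu₁, v₁, hv₁, rfl⟩, s(u₂, v₂), ⟨h₂, u₂, hu₂, v₂, hv₂, rfl⟩,
    fun h => ?_, ?_, ?_⟩
  · rcases Sym2.eq_iff.1 h with ⟨rfl, rfl⟩ | ⟨rfl, -⟩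
    exacts [hne.elim (· rfl) (· rfl), hv₂ hu₁]
  · simp [Sym2.mem_iff, Ne.symm hu₁x, Ne.symm hv₁x]
  · simp [Sym2.mem_iff, Ne.symm hv₂x, ne_of_mem_of_not_mem hu₂ hxX |>.symm]

end VertexConn

section Cycle

variable {n : ℕ} [NeZero n]

open Fin.NatCast in
lemma Fin.exists_mem_add_one_notMem {P : Set (Fin n)} {a b : Fin n} (ha : a ∈ P) (hb : b ∉ P) :
    ∃ i ∈ P, i + 1 ∉ P := by
  by_contra! h
  have hP (k : ℕ) : a + k ∈ P := by
    induction k with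
    | zero => simpa using ha
    | succ k ih => simpa [add_assoc] using h _ ih
  exact hb (by simpa using hP (b - a).val)

lemma Fin.add_one_add_one_ne_self (hn : 3 ≤ n) (i : Fin n) : i + 1 + 1 ≠ i := by
  obtain ⟨m, rfl⟩ := Nat.exists_eq_add_of_le' hn
  rw [add_assoc, ne_eq, add_eq_left, Fin.ext_iff]
  simp [Fin.val_add, Nat.mod_eq_of_lt (show 2 < m + 3 by omega)]

lemma cycleGraph_adj_add_one (hn : 2 ≤ n) (i : Fin n) : (cycleGraph n).Adj i (i + 1) := by
  obtain ⟨m, rfl⟩ := Nat.exists_eq_add_of_le' hn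
  simp [cycleGraph_adj]

lemma two_le_ncard_edgeBoundary_cycleGraph (hn : 3 ≤ n) {P : Set (Fin n)} {a b : Fin n}
    (ha : a ∈ P) (hb : b ∉ P) : 2 ≤ (edgeBoundary (cycleGraph n) P).ncard := by
  obtain ⟨i, hi, hi'⟩ := Fin.exists_mem_add_one_notMem ha hb
  obtain ⟨j, hj, hj'⟩ := Fin.exists_mem_add_one_notMem (P := Pᶜ) hb (by simpa using ha)
  rw [Set.notMem_compl_iff] at hj'
  refine (Set.one_lt_ncard_iff).2 ⟨s(i, i + 1), s(j + 1, j),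
    ⟨cycleGraph_adj_add_one (by omega) i, i, hi, _, hi', rfl⟩,
    ⟨(cycleGraph_adj_add_one (by omega) j).symm, _, hj', j, hj, rfl⟩, fun h => ?_⟩
  rcases Sym2.eq_iff.1 h with ⟨rfl, h⟩ | ⟨rfl, -⟩
  exacts [Fin.add_one_add_one_ne_self hn j h, hj hi]

lemma eq_add_one_or_eq_sub_one_of_cycleGraph_adj (hn : 2 ≤ n) {i j : Fin n}
    (h : (cycleGraph n).Adj i j) : j = i + 1 ∨ j = i - 1 := by
  obtain ⟨m, rfl⟩ := Nat.exists_eq_add_of_le' hn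
  have : j ∈ (cycleGraph (m + 2)).neighborSet i := h
  rw [cycleGraph_neighborSet] at this
  simpa [or_comm] using this

end Cycle

section ReplacementProduct

variable {V W : Type*} {G₁ : SimpleGraph V} {G₂ : SimpleGraph W} {ℓ : V → W → V}

def cloudEdges (x : V) : Set (Sym2 (V × W)) := {e | e.map Prod.fst = s(x, x)}

lemma replacementProduct_eq_and_eq_of_adj (hℓ : ∀ x, (ℓ x).Injective) {p q p' q' : V × W}
    (h : (replacementProduct G₁ G₂ ℓ).Adj p q) (h' : (replacementProduct G₁ G₂ ℓ).Adj p' q')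
    (hpq : p.1 ≠ q.1) (hp : p.1 = p'.1) (hq : q.1 = q'.1) : p = p' ∧ q = q' := by
  obtain ⟨x, i⟩ := p
  obtain ⟨y, j⟩ := q
  obtain ⟨x', i'⟩ := p'
  obtain ⟨y', j'⟩ := q'
  dsimp only at hpq hp hq
  subst hp hq
  obtain ⟨-, hi, hj⟩ := h.resolve_left fun h => hpq h.1
  obtain ⟨-, hi', hj'⟩ := h'.resolve_left fun h => hpq h.1
  obtain rfl := hℓ x (hi.trans hi'.symm)
  obtain rfl := hℓ y (hj.trans hj'.symm)
  exact ⟨rfl, rfl⟩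

lemma injOn_map_fst_replacementProduct (hℓ : ∀ x, (ℓ x).Injective) :
    Set.InjOn (Sym2.map Prod.fst)
      {e ∈ (replacementProduct G₁ G₂ ℓ).edgeSet | ¬(e.map Prod.fst).IsDiag} := by
  rintro e ⟨he, hd⟩ e' ⟨he', -⟩ heq
  induction e using Sym2.ind with | _ p q => ?_
  induction e' using Sym2.ind with | _ p' q' => ?_
  rw [Sym2.map_mk, Sym2.mk_isDiag_iff] at hd
  rw [Sym2.map_mk, Sym2.map_mk, Sym2.eq_iff] at heq
  rcases heq with ⟨hp, hq⟩ | ⟨hp, hq⟩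
  · obtain ⟨rfl, rfl⟩ := replacementProduct_eq_and_eq_of_adj hℓ he he' hd hp hq
    rfl
  · obtain ⟨rfl, rfl⟩ := replacementProduct_eq_and_eq_of_adj hℓ he he'.symm hd hp hq
    exact Sym2.eq_swap

lemma ncard_edgeBoundary_le_ncard_edgeBoundary_inter_cloudEdges [Finite V] [Finite W]
    (S : Set (V × W)) (x : V) :
    (edgeBoundary G₂ {i | (x, i) ∈ S}).ncard ≤
      (edgeBoundary (replacementProduct G₁ G₂ ℓ) S ∩ cloudEdges x).ncard := by
  refine Set.ncard_le_ncard_of_injOn (Sym2.map (Prod.mk x)) ?_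
    (Sym2.map.injective (Prod.mk_right_injective x)).injOn
  rintro _ ⟨h, i, hi, j, hj, rfl⟩
  simp only [Sym2.map_mk]
  exact ⟨⟨Or.inl ⟨rfl, h⟩, (x, i), hi, (x, j), hj, rfl⟩, by simp [cloudEdges]⟩

end ReplacementProduct

section Labelling

variable {V : Type*} [Finite V] {n : ℕ} {G : SimpleGraph V} {ℓ : V → Fin n → V}

lemma IsRPLabelling.exists_apply_eq (hℓ : IsRPLabelling G ℓ)
    (hreg : ∀ x, (G.neighborSet x).ncard = n) {x y : V} (h : G.Adj x y) : ∃ i, ℓ x i = y := by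
  have hrange : Set.range (ℓ x) = G.neighborSet x :=
    Set.eq_of_subset_of_ncard_le (Set.range_subset_iff.2 (hℓ.2 x)) (by
      rw [hreg, ← Set.image_univ, Set.ncard_image_of_injective _ (hℓ.1 x)]; simp)
  rw [← Set.mem_range, hrange]
  exact h

lemma IsRPLabelling.mk_apply_mem_image_edgeBoundary (hℓ : IsRPLabelling G ℓ)
    (hreg : ∀ x, (G.neighborSet x).ncard = n) {G₂ : SimpleGraph (Fin n)} {S : Set (V × Fin n)}
    {u : V} {i : Fin n} (hu : (u, i) ∈ S) (hv : ∀ j, (ℓ u i, j) ∉ S) (x : V) :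
    s(u, ℓ u i) ∈
      Sym2.map Prod.fst '' (edgeBoundary (replacementProduct G G₂ ℓ) S \ cloudEdges x) := by
  obtain ⟨j, hj⟩ := hℓ.exists_apply_eq hreg (hℓ.2 u i).symm
  refine ⟨s((u, i), (ℓ u i, j)),
    ⟨⟨Or.inr ⟨hℓ.2 u i, rfl, hj⟩, _, hu, _, hv j, rfl⟩, fun h => ?_⟩, by simp⟩
  simp only [cloudEdges, Set.mem_ofPred_eq, Sym2.map_mk, Sym2.eq_iff] at h
  exact (hℓ.2 u i).ne (by rcases h with h | h <;> exact h.1.trans h.2.symm)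

lemma IsRPLabelling.mk_mem_image_edgeBoundary (hℓ : IsRPLabelling G ℓ)
    (hreg : ∀ x, (G.neighborSet x).ncard = n) {G₂ : SimpleGraph (Fin n)} {S : Set (V × Fin n)}
    {u v : V} (huv : G.Adj u v) (hu : ∀ i, (u, i) ∈ S) (hv : ∀ j, (v, j) ∉ S) (x : V) :
    s(u, v) ∈
      Sym2.map Prod.fst '' (edgeBoundary (replacementProduct G G₂ ℓ) S \ cloudEdges x) := by
  obtain ⟨i, rfl⟩ := hℓ.exists_apply_eq hreg huv
  exact hℓ.mk_apply_mem_image_edgeBoundary hreg (hu i) hv x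

end Labelling

section LowerBound

variable {V : Type*} [Finite V] {n : ℕ} {G : SimpleGraph V} {ℓ : V → Fin n → V}
  {G₂ : SimpleGraph (Fin n)} {S : Set (V × Fin n)}

lemma IsRPLabelling.edgeConn_le_ncard_edgeBoundary_replacementProduct (hℓ : IsRPLabelling G ℓ)
    (hreg : ∀ x, (G.neighborSet x).ncard = n) (hS : S.Nonempty) (hSc : Sᶜ.Nonempty)
    (hcl : ∀ x, (∀ i, (x, i) ∈ S) ∨ ∀ i, (x, i) ∉ S) :
    edgeConn G ≤ (edgeBoundary (replacementProduct G G₂ ℓ) S).ncard := by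
  set A : Set V := {x | ∀ i, (x, i) ∈ S}
  obtain ⟨⟨a, i⟩, ha⟩ := hS
  obtain ⟨⟨b, j⟩, hb⟩ := hSc
  have hA : A.Nonempty := ⟨a, (hcl a).resolve_right fun h => h i ha⟩
  have hAc : Aᶜ.Nonempty := ⟨b, fun h => hb (h j)⟩
  calc edgeConn G ≤ (edgeBoundary G A).ncard := edgeConn_le_ncard_edgeBoundary hA hAc
    _ ≤ (Sym2.map Prod.fst '' (edgeBoundary (replacementProduct G G₂ ℓ) S \ cloudEdges a)).ncard :=
        Set.ncard_le_ncard <| by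
          rintro _ ⟨huv, u, hu, v, hv, rfl⟩
          exact hℓ.mk_mem_image_edgeBoundary hreg huv hu ((hcl v).resolve_left hv) a
    _ ≤ (edgeBoundary (replacementProduct G G₂ ℓ) S \ cloudEdges a).ncard := Set.ncard_image_le
    _ ≤ (edgeBoundary (replacementProduct G G₂ ℓ) S).ncard := Set.ncard_le_ncard Set.sdiff_subset

lemma IsRPLabelling.one_lt_ncard_image_edgeBoundary_of_subset_cloud (hℓ : IsRPLabelling G ℓ)
    (hreg : ∀ x, (G.neighborSet x).ncard = n) {x : V} (hS : S.Nonempty)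
    (hSx : ∀ p ∈ S, p.1 = x) (hside : ∀ p ∈ S, ∃ q ∈ S, (replacementProduct G G₂ ℓ).Adj p q) :
    1 < (Sym2.map Prod.fst ''
      (edgeBoundary (replacementProduct G G₂ ℓ) S \ cloudEdges x)).ncard := by
  obtain ⟨⟨y, i⟩, hi⟩ := hS
  obtain ⟨⟨y', j⟩, hj, hij⟩ := hside _ hi
  have hy : y = x := hSx _ hi
  have hy' : y' = x := hSx _ hj
  subst y y'
  have hout (k : Fin n) : ∀ j, (ℓ x k, j) ∉ S := fun _ h => (hℓ.2 x k).ne' (hSx _ h)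
  refine (Set.one_lt_ncard_iff).2 ⟨_, _, hℓ.mk_apply_mem_image_edgeBoundary hreg hi (hout i) x,
    hℓ.mk_apply_mem_image_edgeBoundary hreg hj (hout j) x, ?_⟩
  rw [Ne, Sym2.congr_right]
  exact (hℓ.1 x).ne fun h => hij.ne (h ▸ rfl)

lemma IsRPLabelling.one_lt_ncard_image_edgeBoundary (hℓ : IsRPLabelling G ℓ)
    (h3 : 3 ≤ vertexConn G) (hreg : ∀ x, (G.neighborSet x).ncard = n) {x : V}
    (hS : S.Nonempty) (hSc : Sᶜ.Nonempty)
    (hside : ∀ p, ∃ q, (replacementProduct G G₂ ℓ).Adj p q ∧ (p ∈ S ↔ q ∈ S))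
    (hcl : ∀ y ≠ x, (∀ i, (y, i) ∈ S) ∨ ∀ i, (y, i) ∉ S) :
    1 < (Sym2.map Prod.fst ''
      (edgeBoundary (replacementProduct G G₂ ℓ) S \ cloudEdges x)).ncard := by
  by_cases hA : ∃ a ≠ x, ∀ i, (a, i) ∈ S
  · by_cases hB : ∃ b ≠ x, ∀ i, (b, i) ∉ S
    · obtain ⟨a, hax, ha⟩ := hA
      obtain ⟨b, hbx, hb⟩ := hB
      obtain ⟨⟨-, k⟩, -⟩ := hS
      set X : Set V := {y | y ≠ x ∧ ∀ i, (y, i) ∈ S}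
      have hlift : ∀ e ∈ edgeBoundary G X, x ∉ e →
          e ∈ Sym2.map Prod.fst '' (edgeBoundary (replacementProduct G G₂ ℓ) S \ cloudEdges x) := by
        rintro _ ⟨huv, u, hu, v, hv, rfl⟩ hx
        have hvx : v ≠ x := fun h => hx (h ▸ Sym2.mem_mk_right u v)
        exact hℓ.mk_mem_image_edgeBoundary hreg huv hu.2
          ((hcl v hvx).resolve_left fun h => hv ⟨hvx, h⟩) x
      obtain ⟨e₁, he₁, e₂, he₂, hne, hx₁, hx₂⟩ := exists_ne_mem_edgeBoundary_of_three_le_vertexConn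
        h3 (X := X) (fun h => h.1 rfl) ⟨hax, ha⟩ (fun h => hb k (h.2 k)) hbx
      exact (Set.one_lt_ncard_iff).2 ⟨e₁, e₂, hlift _ he₁ hx₁, hlift _ he₂ hx₂, hne⟩
    · push Not at hB
      rw [← edgeBoundary_compl (S := S)]
      refine hℓ.one_lt_ncard_image_edgeBoundary_of_subset_cloud hreg hSc (fun p hp => ?_)
        fun p hp => ?_
      · by_contra hpx
        obtain ⟨i, hi⟩ := hB p.1 hpx
        exact hp (((hcl p.1 hpx).resolve_right fun h => h i hi) p.2)
      · obtain ⟨q, hpq, hq⟩ := hside p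
        exact ⟨q, fun h => hp (hq.2 h), hpq⟩
  · push Not at hA
    refine hℓ.one_lt_ncard_image_edgeBoundary_of_subset_cloud hreg hS (fun p hp => ?_)
      fun p hp => ?_
    · by_contra hpx
      obtain ⟨i, hi⟩ := hA p.1 hpx
      exact ((hcl p.1 hpx).resolve_left fun h => hi (h i)) p.2 hp
    · obtain ⟨q, hpq, hq⟩ := hside p
      exact ⟨q, hq.1 hp, hpq⟩

lemma two_le_ncard_edgeBoundary_inter_cloudEdges [NeZero n] (hn : 3 ≤ n) {x : V} {i j : Fin n}
    (hi : (x, i) ∈ S) (hj : (x, j) ∉ S) :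
    2 ≤ (edgeBoundary (replacementProduct G (cycleGraph n) ℓ) S ∩ cloudEdges x).ncard :=
  (two_le_ncard_edgeBoundary_cycleGraph hn (P := {k | (x, k) ∈ S}) hi hj).trans
    (ncard_edgeBoundary_le_ncard_edgeBoundary_inter_cloudEdges S x)

lemma IsRPLabelling.min_edgeConn_four_le_ncard_edgeBoundary (hℓ : IsRPLabelling G ℓ)
    (h3 : 3 ≤ vertexConn G) (hreg : ∀ x, (G.neighborSet x).ncard = n) [NeZero n] (hn : 3 ≤ n)
    (hS : S.Nonempty) (hSc : Sᶜ.Nonempty)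
    (hside : ∀ p, ∃ q, (replacementProduct G (cycleGraph n) ℓ).Adj p q ∧ (p ∈ S ↔ q ∈ S)) :
    min (edgeConn G) 4 ≤ (edgeBoundary (replacementProduct G (cycleGraph n) ℓ) S).ncard := by
  by_cases hcl : ∀ x, (∀ i, (x, i) ∈ S) ∨ ∀ i, (x, i) ∉ S
  · exact min_le_left _ _ |>.trans
      (hℓ.edgeConn_le_ncard_edgeBoundary_replacementProduct hreg hS hSc hcl)
  push Not at hcl
  obtain ⟨x, ⟨j, hj⟩, i, hi⟩ := hcl
  have hcross :
      2 ≤ (edgeBoundary (replacementProduct G (cycleGraph n) ℓ) S \ cloudEdges x).ncard := by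
    by_cases hcl' : ∀ y ≠ x, (∀ i, (y, i) ∈ S) ∨ ∀ i, (y, i) ∉ S
    · exact (hℓ.one_lt_ncard_image_edgeBoundary h3 hreg hS hSc hside hcl').trans_le
        Set.ncard_image_le
    push Not at hcl'
    obtain ⟨y, hyx, ⟨j', hj'⟩, i', hi'⟩ := hcl'
    refine (two_le_ncard_edgeBoundary_inter_cloudEdges hn hi' hj').trans
      (Set.ncard_le_ncard fun e ⟨he, hey⟩ => ⟨he, fun hex => hyx ?_⟩)
    have : s(y, y) = s(x, x) := hey.symm.trans hex
    simpa using this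
  have hcloud := two_le_ncard_edgeBoundary_inter_cloudEdges (G := G) (ℓ := ℓ) hn hi hj
  rw [← Set.ncard_inter_add_ncard_sdiff_eq_ncard _ (cloudEdges x)]
  omega

end LowerBound

section UpperBound

variable {V : Type*} {n : ℕ} [NeZero n] {G : SimpleGraph V} {ℓ : V → Fin n → V}

lemma eq_or_eq_or_eq_of_adj_replacementProduct_cycleGraph (hℓ : ∀ x, (ℓ x).Injective)
    (hn : 2 ≤ n) {x : V} {i : Fin n} {c q : V × Fin n}
    (hc : (replacementProduct G (cycleGraph n) ℓ).Adj (x, i) c) (hcx : c.1 ≠ x)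
    (hq : (replacementProduct G (cycleGraph n) ℓ).Adj (x, i) q) :
    q = (x, i + 1) ∨ q = (x, i - 1) ∨ q = c := by
  obtain ⟨hqx, hq'⟩ | ⟨hxq, hq', -⟩ := id hq
  · rcases eq_add_one_or_eq_sub_one_of_cycleGraph_adj hn hq' with h | h
    exacts [.inl (Prod.ext hqx.symm h), .inr (.inl (Prod.ext hqx.symm h))]
  · have hc' : ℓ x i = c.1 := (hc.resolve_left fun h => hcx h.1.symm).2.1
    exact .inr (.inr (replacementProduct_eq_and_eq_of_adj hℓ hq hc hxq.ne rfl
      (hq'.symm.trans hc')).2)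

lemma exists_isRestrictedEdgeCut_ncard_le_edgeConn [Finite V] [Nontrivial V] (hn : 2 ≤ n)
    (hℓ : ∀ x, (ℓ x).Injective) :
    ∃ F, IsRestrictedEdgeCut (replacementProduct G (cycleGraph n) ℓ) F ∧ F.ncard ≤ edgeConn G := by
  obtain ⟨A, ⟨a, ha⟩, ⟨b, hb⟩, hA⟩ := exists_ncard_edgeBoundary_le_edgeConn (G := G)
  refine ⟨_, isRestrictedEdgeCut_edgeBoundary (S := Prod.fst ⁻¹' A) ⟨(a, 0), ha⟩ ⟨(b, 0), hb⟩
    fun p => ⟨(p.1, p.2 + 1), .inl ⟨rfl, cycleGraph_adj_add_one hn p.2⟩, Iff.rfl⟩, ?_⟩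
  have hcross : ∀ e ∈ edgeBoundary (replacementProduct G (cycleGraph n) ℓ) (Prod.fst ⁻¹' A),
      e ∈ (replacementProduct G (cycleGraph n) ℓ).edgeSet ∧ ¬(e.map Prod.fst).IsDiag ∧
        e.map Prod.fst ∈ edgeBoundary G A := by
    rintro _ ⟨he, u, hu, v, hv, rfl⟩
    have huv : u.1 ≠ v.1 := ne_of_mem_of_not_mem (s := A) hu hv
    simp only [Sym2.map_mk, Sym2.mk_isDiag_iff]
    exact ⟨he, huv, (he.resolve_left fun h => huv h.1).1, u.1, hu, v.1, hv, rfl⟩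
  refine (Set.ncard_le_ncard_of_injOn _ (fun e he => (hcross e he).2.2) ?_).trans hA
  exact (injOn_map_fst_replacementProduct hℓ).mono fun e he =>
    Set.mem_sep (hcross e he).1 (hcross e he).2.1

lemma IsRPLabelling.isRestrictedEdgeCut_edgeBoundary_pair [Finite V] (hℓ : IsRPLabelling G ℓ)
    (hreg : ∀ x, (G.neighborSet x).ncard = n) (hn : 2 ≤ n) (x : V) :
    IsRestrictedEdgeCut (replacementProduct G (cycleGraph n) ℓ)
      (edgeBoundary (replacementProduct G (cycleGraph n) ℓ) {(x, 0), (x, 1)}) := by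
  have hSx : ∀ p ∈ ({(x, 0), (x, 1)} : Set (V × Fin n)), p.1 = x := by
    rintro _ (rfl | rfl) <;> rfl
  have h01 : (replacementProduct G (cycleGraph n) ℓ).Adj (x, 0) (x, 1) :=
    .inl ⟨rfl, by simpa using cycleGraph_adj_add_one hn 0⟩
  refine isRestrictedEdgeCut_edgeBoundary ⟨_, .inl rfl⟩
    ⟨(ℓ x 0, 0), fun h => (hℓ.2 x 0).ne' (hSx _ h)⟩ fun ⟨y, i⟩ => ?_
  by_cases hi : (y, i) ∈ ({(x, 0), (x, 1)} : Set (V × Fin n))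
  · simp only [Set.mem_insert_iff, Set.mem_singleton_iff, Prod.mk.injEq] at hi
    rcases hi with ⟨rfl, rfl⟩ | ⟨rfl, rfl⟩
    exacts [⟨_, h01, by simp⟩, ⟨_, h01.symm, by simp⟩]
  by_cases hy : y = x
  · subst hy
    obtain ⟨j, hj⟩ := hℓ.exists_apply_eq hreg (hℓ.2 y i).symm
    exact ⟨(ℓ y i, j), .inr ⟨hℓ.2 y i, rfl, hj⟩, iff_of_false hi fun h => (hℓ.2 y i).ne' (hSx _ h)⟩
  · exact ⟨(y, i + 1), .inl ⟨rfl, cycleGraph_adj_add_one hn i⟩,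
      iff_of_false hi fun h => hy (hSx _ h)⟩

lemma IsRPLabelling.ncard_edgeBoundary_pair_le_four [Finite V] (hℓ : IsRPLabelling G ℓ)
    (hreg : ∀ x, (G.neighborSet x).ncard = n) (hn : 2 ≤ n) (x : V) :
    (edgeBoundary (replacementProduct G (cycleGraph n) ℓ) {(x, 0), (x, 1)}).ncard ≤ 4 := by
  have hcross (i : Fin n) : ∃ j, (replacementProduct G (cycleGraph n) ℓ).Adj (x, i) (ℓ x i, j) :=
    (hℓ.exists_apply_eq hreg (hℓ.2 x i).symm).imp fun _ hj => .inr ⟨hℓ.2 x i, rfl, hj⟩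
  obtain ⟨j₀, h₀⟩ := hcross 0
  obtain ⟨j₁, h₁⟩ := hcross 1
  have hsub : edgeBoundary (replacementProduct G (cycleGraph n) ℓ) {(x, 0), (x, 1)} ⊆
      {s((x, 0), (x, 0 - 1)), s((x, 1), (x, 1 + 1)),
        s((x, 0), (ℓ x 0, j₀)), s((x, 1), (ℓ x 1, j₁))} := by
    rintro _ ⟨he, u, hu, v, hv, rfl⟩
    simp only [Set.mem_insert_iff, Set.mem_singleton_iff] at hu
    rcases hu with rfl | rfl
    · rcases eq_or_eq_or_eq_of_adj_replacementProduct_cycleGraph hℓ.1 hn h₀ (hℓ.2 x 0).ne' he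
        with rfl | rfl | rfl
      · exact absurd (by simp) hv
      all_goals simp
    · rcases eq_or_eq_or_eq_of_adj_replacementProduct_cycleGraph hℓ.1 hn h₁ (hℓ.2 x 1).ne' he
        with rfl | rfl | rfl
      · simp
      · exact absurd (by simp) hv
      · simp
  refine (Set.ncard_le_ncard hsub).trans <| (Set.ncard_insert_le _ _).trans <|
    Nat.succ_le_succ <| (Set.ncard_insert_le _ _).trans <|
    Nat.succ_le_succ <| (Set.ncard_insert_le _ _).trans ?_
  rw [Set.ncard_singleton]

end UpperBound

/-- Corollary 4.8. For any `n`-regular graph `G` with `κ(G) ≥ 3`,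
`λ'(G ® C_n) = min {λ(G), 4}`, where `C_n` is the cycle on `n` vertices. -/
theorem restrictedEdgeConn_replacementProduct_cycle
    {V : Type*} [Fintype V] {n : ℕ}
    (G : SimpleGraph V) (ℓ : V → Fin n → V)
    (hℓ : IsRPLabelling G ℓ)
    (h3conn : 3 ≤ vertexConn G)
    (hreg : ∀ x : V, (G.neighborSet x).ncard = n) :
    restrictedEdgeConn (replacementProduct G (SimpleGraph.cycleGraph n) ℓ)
      = min (edgeConn G) 4 := by
  have : Nontrivial V := nontrivial_of_pos_vertexConn (G := G) (by omega)
  obtain ⟨x⟩ : Nonempty V := inferInstance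
  have hn : 3 ≤ n := hreg x ▸ h3conn.trans (vertexConn_le_ncard_neighborSet x)
  have : NeZero n := ⟨by omega⟩
  obtain ⟨F₁, hF₁, hF₁card⟩ := exists_isRestrictedEdgeCut_ncard_le_edgeConn (G := G) (by omega) hℓ.1
  have hF₄ := hℓ.isRestrictedEdgeCut_edgeBoundary_pair hreg (by omega) x
  have hF₄card := hℓ.ncard_edgeBoundary_pair_le_four hreg (by omega) x
  refine le_antisymm (le_min ((restrictedEdgeConn_le_ncard hF₁).trans hF₁card)
    ((restrictedEdgeConn_le_ncard hF₄).trans hF₄card)) (le_restrictedEdgeConn ⟨_, hF₄⟩ ?_)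
  intro F hF
  obtain ⟨S, hS, hSc, hside, hSF⟩ := hF.exists_edgeBoundary_subset
  exact (hℓ.min_edgeConn_four_le_ncard_edgeBoundary h3conn hreg hn hS hSc hside).trans
    (Set.ncard_le_ncard hSF)
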